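/- Let B be a finite simple connected bipartite graph and B′ ⊆ B a connected subgraph. Then λ(B′) ≤ λ(B), where λ denotes the recession connectivity. -/

import Mathlib

/-! Scaffolding for bipartite graphs given by edge sets `B : Finset (L × R)`,
their recession graphs, and the recession connectivity `λ`. -/

variable {L R : Type*}

/-- The undirected simple graph on `L ⊕ R` determined by an edge set `S ⊆ L × R`. -/
def sgraph (S : Finset (L × R)) : SimpleGraph (L ⊕ R) where
  Adj v w := (∃ e ∈ S, v = Sum.inl e.1 ∧ w = Sum.inr e.2) ∨
             (∃ e ∈ S, w = Sum.inl e.1 ∧ v = Sum.inr e.2)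
  symm := by
    constructor
    rintro v w (⟨e, he, h1, h2⟩ | ⟨e, he, h1, h2⟩)
    · exact Or.inr ⟨e, he, h1, h2⟩
    · exact Or.inl ⟨e, he, h1, h2⟩
  loopless := by
    constructor
    rintro v (⟨e, _, h1, h2⟩ | ⟨e, _, h1, h2⟩) <;> subst h1 <;> simp_all

/-- A vertex is incident to the edge set `B` if it is an endpoint of one of its edges. -/
def incid (B : Finset (L × R)) (v : L ⊕ R) : Prop :=
  ∃ e ∈ B, v = Sum.inl e.1 ∨ v = Sum.inr e.2

/-- The arcs of the recession graph `R(S; B)`: every edge of `B` gives an arc from its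
`L`-endpoint to its `R`-endpoint, and every edge of `S` additionally gives the reverse arc. -/
def recArc (S B : Finset (L × R)) (v w : L ⊕ R) : Prop :=
  (∃ e ∈ B, v = Sum.inl e.1 ∧ w = Sum.inr e.2) ∨
  (∃ e ∈ S, w = Sum.inl e.1 ∧ v = Sum.inr e.2)

/-- The recession graph `R(S; B)` is strongly connected: every vertex of `B` reaches
every other vertex of `B` by a directed path. -/
def RecStrong (S B : Finset (L × R)) : Prop :=
  ∀ v w, incid B v → incid B w → Relation.ReflTransGen (recArc S B) v w

/-- The number of connected components of (the graph of) `S` containing at least one edge. -/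
noncomputable def numComp (S : Finset (L × R)) : ℕ :=
  Set.ncard {C : (sgraph S).ConnectedComponent |
    ∃ e ∈ S, C = (sgraph S).connectedComponentMk (Sum.inl e.1)}

/-- The recession connectivity `λ(B)`:  the maximum number of connected components of a
subgraph `S ⊆ B` for which the recession graph `R(S; B)` is strongly connected. -/
noncomputable def recConn (B : Finset (L × R)) : ℕ :=
  sSup {m | ∃ S ⊆ B, RecStrong S B ∧ numComp S = m}

/-- The graph of the edge set `B` is connected (on its own vertex set). -/
def ConnectedOn (B : Finset (L × R)) : Prop :=
  B.Nonempty ∧ ∀ v w, incid B v → incid B w → (sgraph B).Reachable v w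

/-! Grow `B'` to `B` one edge at a time, each new edge sharing a vertex with the current graph;
this is possible because `B` is connected. If both endpoints of the new edge are old, every
witness `S` for the current graph remains a witness. Otherwise the edge is pendant at an old
vertex `t`: adding it to `S` keeps the recession graph strongly connected, since its new endpoint
and `t` are joined by arcs in both directions, and it does not decrease the number of
components, since the new endpoint is not a vertex of `S`. -/

open Finset Relation SimpleGraph Sum

section Basic

variable {S S' B B' : Finset (L × R)} {e : L × R} {v w : L ⊕ R}

lemma incid_mono (h : B ⊆ B') : incid B v → incid B' v := by
  rintro ⟨e, he, hv⟩
  exact ⟨e, h he, hv⟩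

lemma sgraph_mono (h : S ⊆ S') : sgraph S ≤ sgraph S' := by
  rintro v w (⟨e, he, rfl, rfl⟩ | ⟨e, he, rfl, rfl⟩)
  · exact Or.inl ⟨e, h he, rfl, rfl⟩
  · exact Or.inr ⟨e, h he, rfl, rfl⟩

lemma sgraph_adj_of_mem (he : e ∈ S) : (sgraph S).Adj (inl e.1) (inr e.2) :=
  Or.inl ⟨e, he, rfl, rfl⟩

lemma incid_of_sgraph_adj (h : (sgraph S).Adj v w) : incid S v := by
  rcases h with ⟨e, he, rfl, rfl⟩ | ⟨e, he, rfl, rfl⟩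
  exacts [⟨e, he, Or.inl rfl⟩, ⟨e, he, Or.inr rfl⟩]

lemma sgraph_singleton_adj_iff : (sgraph {e}).Adj v w ↔ s(v, w) = s(inl e.1, inr e.2) := by
  constructor
  · rintro (⟨e', he', rfl, rfl⟩ | ⟨e', he', rfl, rfl⟩) <;> obtain rfl := mem_singleton.1 he'
    exacts [rfl, Sym2.eq_swap]
  · intro h
    have hadj := sgraph_adj_of_mem (mem_singleton_self e)
    rcases Sym2.eq_iff.1 h with ⟨rfl, rfl⟩ | ⟨rfl, rfl⟩
    exacts [hadj, hadj.symm]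

lemma recArc_mono (hS : S ⊆ S') (hB : B ⊆ B') : recArc S B v w → recArc S' B' v w := by
  rintro (⟨e, he, rfl, rfl⟩ | ⟨e, he, rfl, rfl⟩)
  · exact Or.inl ⟨e, hB he, rfl, rfl⟩
  · exact Or.inr ⟨e, hS he, rfl, rfl⟩

lemma recArc_of_sgraph_adj (hSB : S ⊆ B) (h : (sgraph S).Adj v w) : recArc S B v w := by
  rcases h with ⟨e, he, rfl, rfl⟩ | h
  · exact Or.inl ⟨e, hSB he, rfl, rfl⟩
  · exact Or.inr h

lemma RecStrong.mono (h : RecStrong S B) (hS : S ⊆ S') (hB : B ⊆ B') (hv : incid B v)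
    (hw : incid B w) : ReflTransGen (recArc S' B') v w :=
  ReflTransGen.mono (fun _ _ => recArc_mono hS hB) _ _ (h v w hv hw)

end Basic

section Insert

variable [DecidableEq L] [DecidableEq R] {S B : Finset (L × R)} {e : L × R} {u t v w : L ⊕ R}

lemma sgraph_insert : sgraph (insert e S) = sgraph {e} ⊔ sgraph S := by
  ext v w
  simp only [sgraph, sup_adj, mem_insert, mem_singleton]
  grind

lemma incid_or_eq_of_incid_insert (hut : (sgraph {e}).Adj u t) (hv : incid (insert e B) v) :
    incid B v ∨ v = u ∨ v = t := by
  obtain ⟨e', he', hv⟩ := hv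
  rcases mem_insert.1 he' with rfl | he'
  · rw [← Sym2.mem_iff, ← sgraph_singleton_adj_iff.1 hut, Sym2.mem_iff] at hv
    exact Or.inr hv
  · exact Or.inl ⟨e', he', hv⟩

lemma sgraph_reachable_of_reachable_insert (hu : ¬ incid S u) (hut : (sgraph {e}).Adj u t)
    (hv : v ≠ u) (hw : w ≠ u) (h : (sgraph (insert e S)).Reachable v w) :
    (sgraph S).Reachable v w := by
  -- collapsing the pendant vertex `u` onto `t` maps every edge of `insert e S` into an `S`-path
  set F := Function.update id u t
  have hF : ∀ x ≠ u, F x = x := fun x hx => Function.update_of_ne hx _ _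
  have step : ∀ a b, (sgraph (insert e S)).Adj a b → ReflTransGen (sgraph S).Adj (F a) (F b) := by
    intro a b hab
    rw [sgraph_insert, sup_adj] at hab
    rcases hab with hab | hab
    · have hFu : F u = t := Function.update_self ..
      have hFt : F t = t := hF t hut.ne.symm
      have hab : s(a, b) = s(u, t) :=
        (sgraph_singleton_adj_iff.1 hab).trans (sgraph_singleton_adj_iff.1 hut).symm
      rcases Sym2.eq_iff.1 hab with ⟨rfl, rfl⟩ | ⟨rfl, rfl⟩ <;> rw [hFu, hFt]
    · have ha : a ≠ u := fun h => hu (h ▸ incid_of_sgraph_adj hab)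
      have hb : b ≠ u := fun h => hu (h ▸ incid_of_sgraph_adj hab.symm)
      rw [hF a ha, hF b hb]
      exact .single hab
  rw [reachable_iff_reflTransGen] at h ⊢
  simpa only [Function.onFun, hF v hv, hF w hw] using h.lift' F step _ _

lemma RecStrong.insert_of_incid (h : RecStrong S B) (hl : incid B (inl e.1))
    (hr : incid B (inr e.2)) : RecStrong S (insert e B) := by
  have hV : ∀ x, incid (insert e B) x → incid B x := fun x hx => by
    rcases incid_or_eq_of_incid_insert (sgraph_adj_of_mem (mem_singleton_self e)) hx
      with hx | rfl | rfl <;> assumption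
  intro v w hv hw
  exact h.mono subset_rfl (subset_insert e B) (hV v hv) (hV w hw)

lemma RecStrong.insert_of_adj (h : RecStrong S B) (hut : (sgraph {e}).Adj u t)
    (ht : incid B t) : RecStrong (insert e S) (insert e B) := by
  have arc : ∀ {a b}, (sgraph {e}).Adj a b → recArc (insert e S) (insert e B) a b :=
    fun hab => recArc_mono (singleton_subset_iff.2 (mem_insert_self e S))
      (singleton_subset_iff.2 (mem_insert_self e B)) (recArc_of_sgraph_adj subset_rfl hab)
  have hub : ∀ x, incid (insert e B) x → ReflTransGen (recArc (insert e S) (insert e B)) x t ∧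
      ReflTransGen (recArc (insert e S) (insert e B)) t x := by
    intro x hx
    rcases incid_or_eq_of_incid_insert hut hx with hx | rfl | rfl
    · exact ⟨h.mono (subset_insert e S) (subset_insert e B) hx ht,
        h.mono (subset_insert e S) (subset_insert e B) ht hx⟩
    · exact ⟨.single (arc hut), .single (arc hut.symm)⟩
    · exact ⟨.refl, .refl⟩
  intro v w hv hw
  exact (hub v hv).1.trans (hub w hw).2

end Insert

section Components

variable {S B : Finset (L × R)}

lemma numComp_eq_ncard_image (S : Finset (L × R)) :
    numComp S = ((fun e : L × R => (sgraph S).connectedComponentMk (inl e.1)) '' S).ncard := by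
  unfold numComp
  congr 1
  ext C
  exact ⟨fun ⟨e, he, hC⟩ => ⟨e, he, hC.symm⟩, fun ⟨e, he, hC⟩ => ⟨e, he, hC.symm⟩⟩

lemma numComp_le_card (S : Finset (L × R)) : numComp S ≤ #S := by
  rw [numComp_eq_ncard_image, ← Set.ncard_coe_finset]
  exact Set.ncard_image_le S.finite_toSet

lemma numComp_le_numComp_insert [DecidableEq L] [DecidableEq R] {e : L × R} {u t : L ⊕ R}
    (hu : ¬ incid S u) (hut : (sgraph {e}).Adj u t) : numComp S ≤ numComp (insert e S) := by
  rw [numComp_eq_ncard_image, numComp_eq_ncard_image]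
  refine Set.ncard_le_ncard_of_injOn
    (ConnectedComponent.map (Hom.ofLE (sgraph_mono (subset_insert e S)))) ?_ ?_
    ((insert e S).finite_toSet.image _)
  · rintro _ ⟨f, hf, rfl⟩
    exact ⟨f, mem_insert_of_mem hf, rfl⟩
  · have hne : ∀ f ∈ S, inl f.1 ≠ u := fun f hf h => hu (h ▸ ⟨f, hf, Or.inl rfl⟩)
    rintro _ ⟨f, hf, rfl⟩ _ ⟨f', hf', rfl⟩ h
    exact ConnectedComponent.sound <| sgraph_reachable_of_reachable_insert hu hut
      (hne f hf) (hne f' hf') (ConnectedComponent.exact h)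

lemma le_recConn (hSB : S ⊆ B) (h : RecStrong S B) : numComp S ≤ recConn B :=
  le_csSup ⟨#B, by rintro _ ⟨S, hSB, -, rfl⟩; exact (numComp_le_card S).trans (card_le_card hSB)⟩
    ⟨S, hSB, h, rfl⟩

lemma recConn_le {n : ℕ} (h : ∀ S ⊆ B, RecStrong S B → numComp S ≤ n) : recConn B ≤ n :=
  csSup_le' <| by rintro _ ⟨S, hSB, hS, rfl⟩; exact h S hSB hS

lemma recConn_empty : recConn (∅ : Finset (L × R)) = 0 :=
  Nat.le_zero.1 <| recConn_le fun S hS _ => (numComp_le_card S).trans (card_le_card hS)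

lemma recConn_le_recConn_insert [DecidableEq L] [DecidableEq R] {e : L × R}
    (he : incid B (inl e.1) ∨ incid B (inr e.2)) : recConn B ≤ recConn (insert e B) := by
  refine recConn_le fun S hSB hS => ?_
  by_cases hboth : incid B (inl e.1) ∧ incid B (inr e.2)
  · exact le_recConn (hSB.trans (subset_insert e B)) (hS.insert_of_incid hboth.1 hboth.2)
  obtain ⟨u, t, hut, hu, ht⟩ : ∃ u t, (sgraph {e}).Adj u t ∧ ¬ incid B u ∧ incid B t := by
    have hadj := sgraph_adj_of_mem (mem_singleton_self e)
    rcases he with he | he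
    exacts [⟨_, _, hadj.symm, fun h => hboth ⟨he, h⟩, he⟩, ⟨_, _, hadj, fun h => hboth ⟨h, he⟩, he⟩]
  calc numComp S ≤ numComp (insert e S) :=
        numComp_le_numComp_insert (fun h => hu (incid_mono hSB h)) hut
    _ ≤ recConn (insert e B) :=
        le_recConn (insert_subset_insert e hSB) (hS.insert_of_adj hut ht)

end Components

lemma exists_mem_sdiff_incid {B B₀ : Finset (L × R)} (hB : ConnectedOn B) (hsub : B₀ ⊂ B)
    (hne : B₀.Nonempty) : ∃ e ∈ B, e ∉ B₀ ∧ (incid B₀ (inl e.1) ∨ incid B₀ (inr e.2)) := by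
  by_contra! h
  have closed : ∀ a b, (sgraph B).Adj a b → incid B₀ a → incid B₀ b := by
    rintro a b (⟨e, he, rfl, rfl⟩ | ⟨e, he, rfl, rfl⟩) ha <;> by_cases he₀ : e ∈ B₀
    exacts [⟨e, he₀, Or.inr rfl⟩, absurd ha (h e he he₀).1, ⟨e, he₀, Or.inl rfl⟩,
      absurd ha (h e he he₀).2]
  obtain ⟨f, hf⟩ := hne
  obtain ⟨e, he, he₀⟩ := exists_of_ssubset hsub
  have hV : ∀ x, ReflTransGen (sgraph B).Adj (inl f.1) x → incid B₀ x := by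
    intro x hx
    induction hx with
    | refl => exact ⟨f, hf, Or.inl rfl⟩
    | tail _ hadj ih => exact closed _ _ hadj ih
  exact (h e he he₀).1 <| hV _ <| (reachable_iff_reflTransGen _ _).1 <|
    hB.2 _ _ ⟨f, hsub.subset hf, Or.inl rfl⟩ ⟨e, he, Or.inl rfl⟩

theorem recConn_le_of_subset_of_nonempty {B B₀ : Finset (L × R)} (hB : ConnectedOn B)
    (hsub : B₀ ⊆ B) (hne : B₀.Nonempty) : recConn B₀ ≤ recConn B := by
  classical
  obtain rfl | hssub := hsub.eq_or_ssubset
  · rfl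
  obtain ⟨e, he, he₀, htouch⟩ := exists_mem_sdiff_incid hB hssub hne
  have hdecr : #B - #(insert e B₀) < #B - #B₀ := by
    have := card_le_card (insert_subset he hsub)
    rw [card_insert_of_notMem he₀] at this ⊢
    omega
  calc recConn B₀ ≤ recConn (insert e B₀) := recConn_le_recConn_insert htouch
    _ ≤ recConn B :=
      recConn_le_of_subset_of_nonempty hB (insert_subset he hsub) (insert_nonempty e B₀)
termination_by #B - #B₀

theorem recConn_mono_general {L R : Type*} (B B' : Finset (L × R)) (hsub : B' ⊆ B)
    (hB : ConnectedOn B) : recConn B' ≤ recConn B := by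
  obtain rfl | hne := B'.eq_empty_or_nonempty
  · exact recConn_empty.trans_le (Nat.zero_le _)
  · exact recConn_le_of_subset_of_nonempty hB hsub hne

/-- If `B` is a finite simple connected bipartite graph and `B' ⊆ B` a
connected subgraph, then `λ(B') ≤ λ(B)`. -/
theorem recConn_mono {L R : Type*} (B B' : Finset (L × R)) (hsub : B' ⊆ B)
    (hB : ConnectedOn B) (hB' : ConnectedOn B') : recConn B' ≤ recConn B :=
  recConn_mono_general B B' hsub hB
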